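/- Let (Σ,μ) be a measure space, 1 ≤ p < ∞, Y a Banach space, and Ω : L_p(μ) → Y a quasi-linear map with quasi-linearity constant Z(Ω). Let A and B be disjoint measurable subsets of Σ. If Ω is c-trivial on L_p(A) and d-trivial on L_p(B), then Ω is 2(Z(Ω)+c+d)-trivial on L_p(A ∪ B). -/

import Mathlib

/-! Write `x ∈ L_p(A ∪ B)` as `1_A x + 1_B x`, both pieces of norm at most `‖x‖`. Given linear
`L_A`, `L_B` close to `Ω` on `L_p(A)` and `L_p(B)`, the map `x ↦ L_A (1_A x) + L_B (1_B x)` is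
linear, and quasi-linearity bounds `Ω x - Ω (1_A x) - Ω (1_B x)` by `2 Z ‖x‖`; this even gives
the constant `2 Z + c + d`. -/

open MeasureTheory
open scoped ENNReal

noncomputable section

section Defs

variable {X Y : Type*} [NormedAddCommGroup X] [NormedSpace ℝ X]
  [NormedAddCommGroup Y] [NormedSpace ℝ Y]

/-- `Ω` is `C`-trivial on the subspace `E`: some (possibly discontinuous) linear map
`L : E → Y` is at distance at most `C` from `Ω` on `E`. -/
def TrivialOnWith (Ω : X → Y) (E : Submodule ℝ X) (C : ℝ) : Prop :=
  ∃ L : E →ₗ[ℝ] Y, ∀ x : E, ‖Ω x - L x‖ ≤ C * ‖(x : X)‖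

end Defs

/-- The subspace `L_p(A)` of `L_p(μ)` of functions supported a.e. in `A`. -/
def LpSubspace {α : Type*} [MeasurableSpace α] (q : ℝ≥0∞) (μ : Measure α) (A : Set α) :
    Submodule ℝ (Lp ℝ q μ) where
  carrier := {f | ∀ᵐ a ∂μ, a ∉ A → f a = 0}
  zero_mem' := by
    filter_upwards [Lp.coeFn_zero ℝ q μ] with a ha using fun _ => by simpa using ha
  add_mem' := by
    intro f g hf hg
    filter_upwards [hf, hg, Lp.coeFn_add f g] with a hfa hga hadd h
    simp only [hadd, Pi.add_apply, hfa h, hga h, add_zero]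
  smul_mem' := by
    intro c f hf
    filter_upwards [hf, Lp.coeFn_smul c f] with a hfa hs h
    simp only [hs, Pi.smul_apply, hfa h, smul_eq_mul, mul_zero]

section Decomposition

variable {X Y : Type*} [NormedAddCommGroup X] [NormedSpace ℝ X]
  [NormedAddCommGroup Y] [NormedSpace ℝ Y]

theorem TrivialOnWith.mono {Ω : X → Y} {E : Submodule ℝ X} {C C' : ℝ}
    (h : TrivialOnWith Ω E C) (hCC' : C ≤ C') : TrivialOnWith Ω E C' :=
  let ⟨L, hL⟩ := h
  ⟨L, fun x => (hL x).trans (mul_le_mul_of_nonneg_right hCC' (norm_nonneg _))⟩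

theorem TrivialOnWith.of_decomposition {Ω : X → Y} {Z c d : ℝ} (hZ0 : 0 ≤ Z)
    (hZ : ∀ x y : X, ‖Ω (x + y) - Ω x - Ω y‖ ≤ Z * (‖x‖ + ‖y‖))
    {E F G : Submodule ℝ X} (P : G →ₗ[ℝ] E) (Q : G →ₗ[ℝ] F)
    (hPQ : ∀ x, (P x : X) + Q x = x)
    (hP : ∀ x, ‖(P x : X)‖ ≤ ‖(x : X)‖) (hQ : ∀ x, ‖(Q x : X)‖ ≤ ‖(x : X)‖)
    (hc0 : 0 ≤ c) (hd0 : 0 ≤ d) (hE : TrivialOnWith Ω E c) (hF : TrivialOnWith Ω F d) :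
    TrivialOnWith Ω G (2 * Z + c + d) := by
  obtain ⟨LE, hLE⟩ := hE
  obtain ⟨LF, hLF⟩ := hF
  refine ⟨LE ∘ₗ P + LF ∘ₗ Q, fun x => ?_⟩
  set u : X := (P x : X)
  set v : X := (Q x : X)
  have hsplit : Ω x - (LE ∘ₗ P + LF ∘ₗ Q) x =
      (Ω (u + v) - Ω u - Ω v) + (Ω u - LE (P x)) + (Ω v - LF (Q x)) := by
    rw [hPQ]; simp only [LinearMap.add_apply, LinearMap.comp_apply]; abel
  calc ‖Ω x - (LE ∘ₗ P + LF ∘ₗ Q) x‖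
      ≤ ‖Ω (u + v) - Ω u - Ω v‖ + ‖Ω u - LE (P x)‖ + ‖Ω v - LF (Q x)‖ :=
        hsplit ▸ norm_add₃_le
    _ ≤ Z * (‖u‖ + ‖v‖) + c * ‖u‖ + d * ‖v‖ := by
        gcongr <;> [exact hZ u v; exact hLE _; exact hLF _]
    _ ≤ Z * (‖(x : X)‖ + ‖(x : X)‖) + c * ‖(x : X)‖ + d * ‖(x : X)‖ := by
        gcongr <;> [exact hP x; exact hQ x; exact hP x; exact hQ x]
    _ = (2 * Z + c + d) * ‖(x : X)‖ := by ring

end Decomposition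

section Indicator

variable {α : Type*} [MeasurableSpace α] {μ : Measure α} {q : ℝ≥0∞}
  (𝕜 : Type*) {E : Type*} [NormedField 𝕜] [NormedAddCommGroup E] [NormedSpace 𝕜 E]
  {A : Set α} (hA : MeasurableSet A)

def indicatorLp : Lp E q μ →ₗ[𝕜] Lp E q μ where
  toFun f := ((Lp.memLp f).indicator hA).toLp (A.indicator f)
  map_add' f g := by
    rw [← MemLp.toLp_add]
    refine MemLp.toLp_congr _ (((Lp.memLp f).indicator hA).add ((Lp.memLp g).indicator hA)) ?_
    filter_upwards [Lp.coeFn_add f g] with a h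
    by_cases ha : a ∈ A
    · simp only [Pi.add_apply, Set.indicator_of_mem ha, h]
    · simp only [Pi.add_apply, Set.indicator_of_notMem ha, add_zero]
  map_smul' r f := by
    rw [RingHom.id_apply, ← MemLp.toLp_const_smul]
    refine MemLp.toLp_congr _ (((Lp.memLp f).indicator hA).const_smul r) ?_
    filter_upwards [Lp.coeFn_smul r f] with a h
    by_cases ha : a ∈ A
    · simp only [Pi.smul_apply, Set.indicator_of_mem ha, h]
    · simp only [Pi.smul_apply, Set.indicator_of_notMem ha, smul_zero]

theorem indicatorLp_coeFn (f : Lp E q μ) :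
    (indicatorLp 𝕜 hA f : α → E) =ᵐ[μ] A.indicator f := by
  rw [indicatorLp, LinearMap.coe_mk, AddHom.coe_mk]
  exact MemLp.coeFn_toLp _

theorem norm_indicatorLp_le [Fact (1 ≤ q)] (f : Lp E q μ) : ‖indicatorLp 𝕜 hA f‖ ≤ ‖f‖ := by
  refine Lp.norm_le_norm_of_ae_le ?_
  filter_upwards [indicatorLp_coeFn 𝕜 hA f] with a h
  rw [h]
  exact norm_indicator_le_norm_self _ _

theorem indicatorLp_mem_LpSubspace (f : Lp ℝ q μ) : indicatorLp ℝ hA f ∈ LpSubspace q μ A := by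
  filter_upwards [indicatorLp_coeFn ℝ hA f] with a h ha
  rw [h, Set.indicator_of_notMem ha]

theorem indicatorLp_add_indicatorLp_of_mem {B : Set α} (hB : MeasurableSet B)
    (hAB : Disjoint A B) {f : Lp ℝ q μ} (hf : f ∈ LpSubspace q μ (A ∪ B)) :
    indicatorLp ℝ hA f + indicatorLp ℝ hB f = f := by
  refine Lp.ext ?_
  filter_upwards [Lp.coeFn_add (indicatorLp ℝ hA f) (indicatorLp ℝ hB f),
    indicatorLp_coeFn ℝ hA f, indicatorLp_coeFn ℝ hB f, hf] with a hadd hfA hfB hfAB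
  rw [hadd, Pi.add_apply, hfA, hfB,
    ← Set.indicator_union_of_notMem_inter (fun h => hAB.le_bot h)]
  by_cases ha : a ∈ A ∪ B
  · exact Set.indicator_of_mem ha _
  · rw [Set.indicator_of_notMem ha, hfAB ha]

end Indicator

theorem trivialOnWith_union_general
    {α : Type*} [MeasurableSpace α] {μ : Measure α}
    {q : ℝ≥0∞} [Fact (1 ≤ q)]
    {Y : Type*} [NormedAddCommGroup Y] [NormedSpace ℝ Y]
    (Ω : Lp ℝ q μ → Y)
    (Z : ℝ) (hZ0 : 0 ≤ Z)
    (hZ : ∀ x y : Lp ℝ q μ, ‖Ω (x + y) - Ω x - Ω y‖ ≤ Z * (‖x‖ + ‖y‖))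
    {A B : Set α} (hA : MeasurableSet A) (hB : MeasurableSet B) (hAB : Disjoint A B)
    {c d : ℝ} (hc0 : 0 ≤ c) (hd0 : 0 ≤ d)
    (hc : TrivialOnWith Ω (LpSubspace q μ A) c)
    (hd : TrivialOnWith Ω (LpSubspace q μ B) d) :
    TrivialOnWith Ω (LpSubspace q μ (A ∪ B)) (2 * (Z + c + d)) := by
  refine (TrivialOnWith.of_decomposition hZ0 hZ
    ((indicatorLp ℝ hA).restrict fun f _ => indicatorLp_mem_LpSubspace hA f)
    ((indicatorLp ℝ hB).restrict fun f _ => indicatorLp_mem_LpSubspace hB f)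
    (fun x => indicatorLp_add_indicatorLp_of_mem hA hB hAB x.2)
    (fun x => by rw [LinearMap.restrict_apply]; exact norm_indicatorLp_le ℝ hA _)
    (fun x => by rw [LinearMap.restrict_apply]; exact norm_indicatorLp_le ℝ hB _)
    hc0 hd0 hc hd).mono (by linarith)

/-- If a quasi-linear map `Ω` on `L_p(μ)` with quasi-linearity constant `Z`
is `c`-trivial on `L_p(A)` and `d`-trivial on `L_p(B)` for disjoint measurable sets `A`, `B`,
then it is `2(Z + c + d)`-trivial on `L_p(A ∪ B)`. -/
theorem trivialOnWith_union
    {α : Type*} [MeasurableSpace α] {μ : Measure α}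
    {q : ℝ≥0∞} [Fact (1 ≤ q)] (hq : q ≠ ∞)
    {Y : Type*} [NormedAddCommGroup Y] [NormedSpace ℝ Y] [CompleteSpace Y]
    (Ω : Lp ℝ q μ → Y)
    (hom : ∀ (c : ℝ) (x : Lp ℝ q μ), Ω (c • x) = c • Ω x)
    (Z : ℝ) (hZ0 : 0 ≤ Z)
    (hZ : ∀ x y : Lp ℝ q μ, ‖Ω (x + y) - Ω x - Ω y‖ ≤ Z * (‖x‖ + ‖y‖))
    {A B : Set α} (hA : MeasurableSet A) (hB : MeasurableSet B) (hAB : Disjoint A B)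
    {c d : ℝ} (hc0 : 0 ≤ c) (hd0 : 0 ≤ d)
    (hc : TrivialOnWith Ω (LpSubspace q μ A) c)
    (hd : TrivialOnWith Ω (LpSubspace q μ B) d) :
    TrivialOnWith Ω (LpSubspace q μ (A ∪ B)) (2 * (Z + c + d)) :=
  trivialOnWith_union_general Ω Z hZ0 hZ hA hB hAB hc0 hd0 hc hd
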